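/- arXiv:1910.01094 — 12 statements merged into one kernel-verified Lean document; each statement's English description precedes it below -/
import Mathlib

section
/- Let F and G be ultrafilters on the positive natural numbers and let F·G be their product with respect to multiplication. If B ⊆ P is a set of primes and A = B↑ (the set of positive naturals divisible by some element of B) belongs to F·G, then A ∈ F or A ∈ G. -/
/-- A set of positive naturals is upward closed under divisibility. -/
def upClosed (A : Set ℕ+) : Prop := ∀ a ∈ A, ∀ n : ℕ+, a ∣ n → n ∈ A

/-- The divisibility relation `∼∣` on ultrafilters: `F ∩ U ⊆ G`. -/
def sdvd (F G : Ultrafilter ℕ+) : Prop := ∀ A : Set ℕ+, A ∈ F → upClosed A → A ∈ G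

/-- The product ultrafilter: `A ∈ F·G ↔ {n | {m | m*n ∈ A} ∈ G} ∈ F`. -/
def mulUF (F G : Ultrafilter ℕ+) : Ultrafilter ℕ+ :=
  F.bind (fun n => G.map (fun m => m * n))

/-- `D(F) = {A | {n | nℕ₊ ⊆ A} ∈ F}`. -/
def DF (F : Ultrafilter ℕ+) : Set (Set ℕ+) :=
  {A | {n : ℕ+ | ∀ m : ℕ+, n * m ∈ A} ∈ F}

/-- A strong antichain: pairwise coprime elements. -/
def strongAntichain (X : Set ℕ+) : Prop :=
  X.Pairwise (fun a b => Nat.Coprime (a : ℕ) (b : ℕ))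

/-- An N-free ultrafilter contains no `nℕ₊` with `n ≠ 1`. -/
def NfreeUF (F : Ultrafilter ℕ+) : Prop :=
  ∀ n : ℕ+, n ≠ 1 → {m : ℕ+ | n ∣ m} ∉ F

/-- if B ⊆ P and B↑ ∈ F·G then B↑ ∈ F or B↑ ∈ G. -/
theorem upcl_primes_mem_mul (F G : Ultrafilter ℕ+) (B : Set ℕ+)
    (hB : ∀ p ∈ B, (p : ℕ).Prime)
    (A : Set ℕ+) (hA : A = {n : ℕ+ | ∃ b ∈ B, b ∣ n})
    (h : A ∈ mulUF F G) : A ∈ F ∨ A ∈ G := by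
  by_contra hc
  push_neg at hc
  obtain ⟨hF, hG⟩ := hc
  have hF' : Aᶜ ∈ F := Ultrafilter.compl_mem_iff_notMem.mpr hF
  have hG' : Aᶜ ∈ G := Ultrafilter.compl_mem_iff_notMem.mpr hG
  have h' : {n : ℕ+ | {m : ℕ+ | m * n ∈ A} ∈ G} ∈ F := h
  obtain ⟨n, hn1, hn2⟩ :=
    Ultrafilter.nonempty_of_mem (F.toFilter.inter_sets h' hF')
  obtain ⟨m, hm1, hm2⟩ :=
    Ultrafilter.nonempty_of_mem (G.toFilter.inter_sets hn1 hG')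
  rw [hA] at hm1
  obtain ⟨b, hbB, hbd⟩ := hm1
  have hprime := hB b hbB
  have hdvd : (b : ℕ) ∣ (m : ℕ) * (n : ℕ) := by
    exact_mod_cast (PNat.dvd_iff.mp hbd : ((b:ℕ) ∣ ((m*n : ℕ+):ℕ)))
  rcases (Nat.Prime.dvd_mul hprime).mp hdvd with hd | hd
  · exact hm2 (hA ▸ ⟨b, hbB, PNat.dvd_iff.mpr hd⟩)
  · exact hn2 (hA ▸ ⟨b, hbB, PNat.dvd_iff.mpr hd⟩)
end

section
/- Let P̃ be an ultrafilter on the positive natural numbers containing the set of primes (a prime ultrafilter). If P̃ divides F·G in the sense of ∼∣-divisibility, then P̃ divides F or P̃ divides G. -/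
/-- prime ultrafilters are prime for ∼∣. -/
theorem prime_ultrafilter_prime (P F G : Ultrafilter ℕ+)
    (hP : {p : ℕ+ | (p : ℕ).Prime} ∈ P)
    (h : sdvd P (mulUF F G)) : sdvd P F ∨ sdvd P G := by
  by_contra hc
  push_neg at hc
  obtain ⟨hF, hG⟩ := hc
  unfold sdvd at hF hG
  push_neg at hF hG
  obtain ⟨A, hAP, hAup, hAF⟩ := hF
  obtain ⟨B, hBP, hBup, hBG⟩ := hG
  set C : Set ℕ+ := {n | ∃ p, p ∈ A ∧ p ∈ B ∧ (p : ℕ).Prime ∧ p ∣ n} with hC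
  have hCup : upClosed C := by
    rintro a ⟨p, h1, h2, h3, h4⟩ n han
    exact ⟨p, h1, h2, h3, h4.trans han⟩
  have hCP : C ∈ P := by
    filter_upwards [hAP, hBP, hP] with p h1 h2 h3
    exact ⟨p, h1, h2, h3, dvd_refl p⟩
  have hCmul : C ∈ mulUF F G := h C hCP hCup
  have hCmul' : {n : ℕ+ | {m : ℕ+ | m * n ∈ C} ∈ G} ∈ F := hCmul
  have hAcF : Aᶜ ∈ F := Ultrafilter.compl_mem_iff_notMem.mpr hAF
  have hBcG : Bᶜ ∈ G := Ultrafilter.compl_mem_iff_notMem.mpr hBG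
  obtain ⟨n, hnA, hnG⟩ := Filter.nonempty_of_mem (Filter.inter_mem hAcF hCmul')
  obtain ⟨m, hmB, hmn⟩ := Filter.nonempty_of_mem (Filter.inter_mem hBcG hnG)
  obtain ⟨p, h1, h2, h3, h4⟩ := hmn
  have : (p : ℕ) ∣ (m : ℕ) * (n : ℕ) := by
    have := PNat.dvd_iff.mp h4
    simpa using this
  rcases (Nat.Prime.dvd_mul h3).mp this with hd | hd
  · exact hmB (hBup p h2 m (PNat.dvd_iff.mpr hd))
  · exact hnA (hAup p h1 n (PNat.dvd_iff.mpr hd))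
end

section
/- For ultrafilters F and G on the positive natural numbers, F ∼∣ G holds if and only if for every A ∈ F and every B ∈ G there exist a ∈ A and b ∈ B with a ∣ b. -/
/-- F ∼∣ G iff every A ∈ F, B ∈ G contain a ∈ A, b ∈ B with a ∣ b. -/
theorem sdvd_iff_witnesses (F G : Ultrafilter ℕ+) :
    sdvd F G ↔ ∀ A ∈ F, ∀ B ∈ G, ∃ a ∈ A, ∃ b ∈ B, a ∣ b := by
  constructor
  · intro h A hA B hB
    have hA' : {n : ℕ+ | ∃ a ∈ A, a ∣ n} ∈ F :=
      F.toFilter.mem_of_superset hA (fun a ha => ⟨a, ha, dvd_refl a⟩)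
    have hup : upClosed {n : ℕ+ | ∃ a ∈ A, a ∣ n} := by
      rintro x ⟨a, ha, hax⟩ n hxn
      exact ⟨a, ha, hax.trans hxn⟩
    have hG := h _ hA' hup
    obtain ⟨b, hb1, hb2⟩ := Ultrafilter.nonempty_of_mem (G.toFilter.inter_mem hG hB)
    obtain ⟨a, ha, hab⟩ := hb1
    exact ⟨a, ha, b, hb2, hab⟩
  · intro h A hA hup
    by_contra hAG
    have hc : Aᶜ ∈ G := (Ultrafilter.compl_mem_iff_notMem).2 hAG
    obtain ⟨a, ha, b, hb, hab⟩ := h A hA Aᶜ hc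
    exact hb (hup a ha b hab)
end

section
/- For ultrafilters F, G, H on the positive natural numbers, if F ∼∣ G then F·H ∼∣ G·H and H·F ∼∣ H·G. -/
lemma mem_mulUF {A : Set ℕ+} {F G : Ultrafilter ℕ+} :
    A ∈ mulUF F G ↔ {n : ℕ+ | {m : ℕ+ | m * n ∈ A} ∈ G} ∈ F := by
  show A ∈ Filter.bind F.toFilter _ ↔ _
  rw [Filter.mem_bind']
  rfl

/-- ∼∣ is compatible with multiplication of ultrafilters. -/
theorem sdvd_mul_compat (F G H : Ultrafilter ℕ+) (h : sdvd F G) :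
    sdvd (mulUF F H) (mulUF G H) ∧ sdvd (mulUF H F) (mulUF H G) := by
  constructor
  · intro A hA hup
    rw [mem_mulUF] at hA ⊢
    refine h _ hA ?_
    intro a ha n hdvd
    exact H.toFilter.sets_of_superset ha (fun m hm => hup _ hm _ (mul_dvd_mul_left m hdvd))
  · intro A hA hup
    rw [mem_mulUF] at hA ⊢
    refine H.toFilter.sets_of_superset hA (fun n hn => ?_)
    exact h _ hn (fun a ha m hdvd => hup _ ha _ (mul_dvd_mul_right hdvd n))
end

section
/- Every chain (totally ordered subset) in the quasiordered set of ultrafilters on the positive natural numbers under the relation ∼∣ has a least upper bound (up to the equivalence F =∼ G iff F ∼∣ G and G ∼∣ F). Moreover, if G is such a least upper bound of the chain ⟨F_i : i ∈ I⟩, then G ∩ U = ⋃_{i ∈ I} (F_i ∩ U). -/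
/-!
The traces `F ∩ U` of a `∼∣`-chain form a chain under inclusion, so their union `S`, together
with the complements of the upward closed sets outside `S`, has the finite intersection
property: finitely many of these sets all lie in a single `Fᵢ`. Any ultrafilter `G` extending
this family has trace exactly `S`, and since `∼∣` is inclusion of traces, `G` is a least upper
bound.
-/

namespace Ultrafilter

variable {α : Type*}

def trace (p : Set α → Prop) (F : Ultrafilter α) : Set (Set α) := {A | A ∈ F ∧ p A}

theorem exists_trace_eq_iUnion {ι : Type*} [Nonempty ι] (p : Set α → Prop) (F : ι → Ultrafilter α)
    (hF : Directed (· ⊆ ·) fun i => (F i).trace p) :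
    ∃ G : Ultrafilter α, G.trace p = ⋃ i, (F i).trace p := by
  classical
  set S := ⋃ i, (F i).trace p
  have hfip : ∀ T : Finset (Set α), (T : Set (Set α)) ⊆ S ∪ compl '' {A | p A ∧ A ∉ S} →
      (⋂₀ (T : Set (Set α))).Nonempty := by
    intro T hT
    obtain ⟨j, hj⟩ := hF.exists_mem_subset_of_finset_subset_biUnion (s := T.filter (· ∈ S))
      fun A hA => (Finset.mem_filter.1 hA).2
    refine Filter.nonempty_of_mem (f := (F j : Filter α)) ((Filter.sInter_mem T.finite_toSet).2
      fun B hB => ?_)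
    by_cases hBS : B ∈ S
    · exact (hj (Finset.mem_filter.2 ⟨hB, hBS⟩)).1
    · obtain ⟨A, ⟨hpA, hAS⟩, rfl⟩ := (hT hB).resolve_left hBS
      exact compl_mem_iff_notMem.2 fun hA => hAS (Set.mem_iUnion.2 ⟨j, hA, hpA⟩)
  obtain ⟨G, hG⟩ := exists_ultrafilter_of_finite_inter_nonempty _ hfip
  refine ⟨G, Set.Subset.antisymm (fun A ⟨hA, hpA⟩ => ?_) fun _ hA => ?_⟩
  · by_contra hAS
    exact compl_notMem_iff.2 hA (hG (Or.inr ⟨A, ⟨hpA, hAS⟩, rfl⟩))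
  · obtain ⟨-, -, hpA⟩ := Set.mem_iUnion.1 hA
    exact ⟨hG (Or.inl hA), hpA⟩

end Ultrafilter

theorem sdvd_iff_trace_subset {F G : Ultrafilter ℕ+} :
    sdvd F G ↔ F.trace upClosed ⊆ G.trace upClosed :=
  ⟨fun h A hA => ⟨h A hA.1 hA.2, hA.2⟩, fun h _ hA hup => (h ⟨hA, hup⟩).1⟩

/-- every nonempty ∼∣-chain has a least upper bound G, and
G ∩ U = ⋃ᵢ (Fᵢ ∩ U). -/
theorem chain_has_lub {I : Type} [Nonempty I] (Fc : I → Ultrafilter ℕ+)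
    (hchain : ∀ i j : I, sdvd (Fc i) (Fc j) ∨ sdvd (Fc j) (Fc i)) :
    ∃ G : Ultrafilter ℕ+,
      (∀ i, sdvd (Fc i) G) ∧
      (∀ H : Ultrafilter ℕ+, (∀ i, sdvd (Fc i) H) → sdvd G H) ∧
      ({A : Set ℕ+ | A ∈ G ∧ upClosed A} =
        ⋃ i : I, {A : Set ℕ+ | A ∈ Fc i ∧ upClosed A}) := by
  have hdir : Directed (· ⊆ ·) fun i => (Fc i).trace upClosed := fun i j =>
    (hchain i j).elim (fun h => ⟨j, sdvd_iff_trace_subset.1 h, subset_rfl⟩)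
      fun h => ⟨i, subset_rfl, sdvd_iff_trace_subset.1 h⟩
  obtain ⟨G, hG⟩ := Ultrafilter.exists_trace_eq_iUnion upClosed Fc hdir
  refine ⟨G, fun i => ?_, fun H hH => ?_, hG⟩
  · rw [sdvd_iff_trace_subset, hG]
    exact Set.subset_iUnion (fun i => (Fc i).trace upClosed) i
  · rw [sdvd_iff_trace_subset, hG]
    exact Set.iUnion_subset fun i => sdvd_iff_trace_subset.1 (hH i)
end

section
/- If ⟨G_i : i ∈ I⟩ is a ∼∣-chain of ultrafilters on the positive natural numbers indexed by a directed set I, W is an ultrafilter on I containing all final segments {j : j ≥ i}, and G = lim_{i→W} G_i is the limit ultrafilter, then G is an upper bound of the chain with respect to ∼∣, and G ∩ U = ⋃_{i∈I} (G_i ∩ U). -/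
/-- the W-limit of a ∼∣-chain indexed by a directed set is an
upper bound, and its intersection with U is the union of the Gᵢ ∩ U. -/
theorem limit_is_upper_bound {I : Type} [Preorder I]
    (hdir : ∀ i j : I, ∃ k, i ≤ k ∧ j ≤ k)
    (Gc : I → Ultrafilter ℕ+)
    (hchain : ∀ i j : I, i ≤ j → sdvd (Gc i) (Gc j))
    (W : Ultrafilter I)
    (hW : ∀ i : I, {j : I | i ≤ j} ∈ W) :
    (∀ i : I, sdvd (Gc i) (W.bind Gc)) ∧
    ({A : Set ℕ+ | A ∈ W.bind Gc ∧ upClosed A} =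
      ⋃ i : I, {A : Set ℕ+ | A ∈ Gc i ∧ upClosed A}) := by
  have hbind : ∀ A : Set ℕ+, A ∈ W.bind Gc ↔ {i | A ∈ Gc i} ∈ W := by
    intro A; rfl
  have hub : ∀ i : I, sdvd (Gc i) (W.bind Gc) := by
    intro i A hA hup
    rw [hbind]
    exact Filter.mem_of_superset (hW i) (fun j hj => hchain i j hj A hA hup)
  refine ⟨hub, ?_⟩
  ext A
  simp only [Set.mem_setOf_eq, Set.mem_iUnion]
  constructor
  · rintro ⟨hA, hup⟩
    rw [hbind] at hA
    obtain ⟨i, hi⟩ := Ultrafilter.nonempty_of_mem hA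
    exact ⟨i, hi, hup⟩
  · rintro ⟨i, hA, hup⟩
    exact ⟨hub i A hA hup, hup⟩
end

section
/- If A and B are upward-closed (under divisibility) N-free sets of positive natural numbers, then A ∩ B is N-free. -/
/-! If `A ∩ B ⊆ ⋃ n ∈ s, nℕ₊`, pick `a ∈ A` and `b ∈ B` coprime to `N = ∏ n ∈ s, n`. By upward
closure `ab ∈ A ∩ B`, yet `ab` is coprime to `N` and so lies in no `nℕ₊` with `n ∣ N`, `n ≠ 1`. -/

lemma PNat.eq_one_of_dvd_of_coprime {n a N : ℕ+} (hna : n ∣ a) (hnN : n ∣ N)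
    (h : a.Coprime N) : n = 1 :=
  (PNat.dvd_one_iff n).mp (h ▸ PNat.dvd_gcd hna hnN)

-- If no element of `A` were coprime to `N`, then `A` would be covered by the `dℕ₊`, `1 < d ≤ N`,
-- taking `d = gcd(a, N)` for `a ∈ A`.
lemma exists_coprime_of_not_covered {A : Set ℕ+}
    (hA : ¬ ∃ s : Finset ℕ+, (∀ n ∈ s, n ≠ 1) ∧ A ⊆ ⋃ n ∈ s, {m : ℕ+ | n ∣ m})
    (N : ℕ+) : ∃ a ∈ A, a.Coprime N := by
  by_contra! h
  refine hA ⟨Finset.Ioc 1 N, fun n hn => (Finset.mem_Ioc.mp hn).1.ne', fun a ha => ?_⟩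
  have hgcd : a.gcd N ∈ Finset.Ioc 1 N :=
    Finset.mem_Ioc.mpr ⟨lt_of_le_of_ne one_le (Ne.symm (h a ha)),
      PNat.le_of_dvd (PNat.gcd_dvd_right a N)⟩
  exact Set.mem_biUnion hgcd (PNat.gcd_dvd_left a N)

/-- the intersection of two upward-closed N-free sets is N-free. -/
theorem inter_Nfree (A B : Set ℕ+)
    (hA : upClosed A) (hB : upClosed B)
    (hAf : ¬ ∃ s : Finset ℕ+, (∀ n ∈ s, n ≠ 1) ∧ A ⊆ ⋃ n ∈ s, {m : ℕ+ | n ∣ m})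
    (hBf : ¬ ∃ s : Finset ℕ+, (∀ n ∈ s, n ≠ 1) ∧ B ⊆ ⋃ n ∈ s, {m : ℕ+ | n ∣ m}) :
    ¬ ∃ s : Finset ℕ+, (∀ n ∈ s, n ≠ 1) ∧ A ∩ B ⊆ ⋃ n ∈ s, {m : ℕ+ | n ∣ m} := by
  rintro ⟨s, hs, hcover⟩
  obtain ⟨a, ha, hac⟩ := exists_coprime_of_not_covered hAf (∏ n ∈ s, n)
  obtain ⟨b, hb, hbc⟩ := exists_coprime_of_not_covered hBf (∏ n ∈ s, n)
  have hab : a * b ∈ A ∩ B := ⟨hA a ha _ (dvd_mul_right a b), hB b hb _ (dvd_mul_left b a)⟩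
  obtain ⟨n, hn, hnab⟩ := Set.mem_iUnion₂.mp (hcover hab)
  exact hs n hn <| PNat.eq_one_of_dvd_of_coprime hnab (Finset.dvd_prod_of_mem _ hn) (hac.mul hbc)
end

section
/- There exists an N-free ultrafilter F on the positive natural numbers that is ∼∣-maximal among N-free ultrafilters: for every N-free ultrafilter G on ℕ₊, G ∼∣ F. -/
/-!
Every N-free ultrafilter contains, for each `N`, the set of numbers coprime to `N`. Hence an
upward closed set lying in some N-free ultrafilter meets every such coprimality set, and finitely
many of them, `A₁ ∈ G₁, …, Aₖ ∈ Gₖ`, have a common element coprime to `N`: the product of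
witnesses `aᵢ ∈ Aᵢ` coprime to `N`. So all these sets together with the coprimality sets have the
finite intersection property, and any ultrafilter extending them is N-free and `∼∣`-above every
N-free ultrafilter.
-/

open Filter

def coprimeFilter : Filter ℕ+ := ⨅ N : ℕ+, 𝓟 {a : ℕ+ | Nat.Coprime a N}

lemma coprimeFilter_hasBasis :
    coprimeFilter.HasBasis (fun _ => True) (fun N : ℕ+ => {a : ℕ+ | Nat.Coprime a N}) := by
  refine hasBasis_iInf_principal fun M N => ⟨M * N, ?_, ?_⟩ <;>
    exact fun a ha => Nat.Coprime.coprime_dvd_right (by simp) (ha : Nat.Coprime a (M * N : ℕ+))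

lemma coprime_mem_coprimeFilter (N : ℕ+) : {a : ℕ+ | Nat.Coprime a N} ∈ coprimeFilter :=
  coprimeFilter_hasBasis.mem_of_mem trivial

lemma nfreeUF_iff_le_coprimeFilter {G : Ultrafilter ℕ+} : NfreeUF G ↔ ↑G ≤ coprimeFilter := by
  constructor
  · intro hG
    refine le_iInf fun N => le_principal_iff.2 ?_
    have hprime : ∀ p ∈ (N : ℕ).primeFactors, {a : ℕ+ | ¬ p ∣ a} ∈ G := by
      intro p hpN
      have hp := Nat.prime_of_mem_primeFactors hpN
      have hnotMem := hG ⟨p, hp.pos⟩ fun h => hp.ne_one (congrArg PNat.val h)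
      convert Ultrafilter.compl_mem_iff_notMem.2 hnotMem using 1
      ext a
      exact not_congr (PNat.dvd_iff (k := ⟨p, hp.pos⟩)).symm
    refine mem_of_superset ((biInter_finset_mem _).2 hprime) fun a ha => ?_
    exact Nat.coprime_of_dvd fun p hp hpa hpN =>
      Set.mem_iInter₂.1 ha p (Nat.mem_primeFactors.2 ⟨hp, hpN, N.ne_zero⟩) hpa
  · intro hG n hn hdvd
    obtain ⟨m, hnm, hmn⟩ := G.nonempty_of_mem (inter_mem hdvd (hG (coprime_mem_coprimeFilter n)))
    exact hn (PNat.coe_eq_one_iff.1 (hmn.symm.eq_one_of_dvd (PNat.dvd_iff.1 hnm)))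

lemma exists_coprime_mem_sInter_of_upClosed {t : Set (Set ℕ+)} (ht : t.Finite) {N : ℕ+}
    (h : ∀ A ∈ t, upClosed A ∧ ∃ a ∈ A, Nat.Coprime a N) :
    ∃ a ∈ ⋂₀ t, Nat.Coprime a N := by
  induction t, ht using Set.Finite.induction_on with
  | empty => exact ⟨1, by simp, by simp⟩
  | @insert B s _ _ ih =>
    obtain ⟨a, has, haN⟩ := ih fun A hA => h A (Set.mem_insert_of_mem _ hA)
    obtain ⟨hBup, b, hbB, hbN⟩ := h B (Set.mem_insert _ _)
    refine ⟨b * a, Set.mem_sInter.2 fun A hA => ?_, by simpa using hbN.mul_left haN⟩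
    rcases Set.mem_insert_iff.1 hA with rfl | hAs
    · exact hBup b hbB _ (dvd_mul_right b a)
    · exact (h A (Set.mem_insert_of_mem _ hAs)).1 a (Set.mem_sInter.1 has A hAs) _
        (dvd_mul_left a b)

def nfreeUpClosedSets : Set (Set ℕ+) := {A | upClosed A ∧ ∃ G : Ultrafilter ℕ+, NfreeUF G ∧ A ∈ G}

lemma neBot_generate_nfreeUpClosedSets_inf_coprimeFilter :
    (generate nfreeUpClosedSets ⊓ coprimeFilter).NeBot := by
  refine inf_neBot_iff.2 fun U hU V hV => ?_
  obtain ⟨t, htU, htfin, htsub⟩ := mem_generate_iff.1 hU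
  obtain ⟨N, -, hNV⟩ := coprimeFilter_hasBasis.mem_iff.1 hV
  obtain ⟨a, hat, haN⟩ := exists_coprime_mem_sInter_of_upClosed htfin (N := N) fun A hA => by
    obtain ⟨hAup, G, hG, hAG⟩ := htU hA
    have hcop := nfreeUF_iff_le_coprimeFilter.1 hG (coprime_mem_coprimeFilter N)
    exact ⟨hAup, G.nonempty_of_mem (inter_mem hAG hcop)⟩
  exact ⟨a, htsub hat, hNV haN⟩

/-- there is a ∼∣-maximal N-free ultrafilter (the class NMAX). -/
theorem exists_NMAX :
    ∃ F : Ultrafilter ℕ+, NfreeUF F ∧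
      ∀ G : Ultrafilter ℕ+, NfreeUF G → sdvd G F := by
  have := neBot_generate_nfreeUpClosedSets_inf_coprimeFilter
  let F := Ultrafilter.of (generate nfreeUpClosedSets ⊓ coprimeFilter)
  refine ⟨F, nfreeUF_iff_le_coprimeFilter.2 ((Ultrafilter.of_le _).trans inf_le_right), ?_⟩
  intro G hG A hAG hAup
  exact Ultrafilter.of_le _ (mem_inf_of_left (mem_generate_of_mem ⟨hAup, G, hG, hAG⟩))
end

section
/- There exists an ultrafilter F on the positive natural numbers that contains every upward-closed (under divisibility) set that belongs to some ultrafilter; in particular, the family U of all nonempty upward-closed sets has the finite intersection property, and any ultrafilter extending U is a ∼∣-greatest element: G ∼∣ F for every ultrafilter G on ℕ₊. -/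
/-- U has the finite intersection property, there is an ultrafilter
extending U, and any such ultrafilter is ∼∣-greatest. -/
theorem exists_MAX :
    (∀ S : Finset (Set ℕ+), (∀ A ∈ S, A.Nonempty ∧ upClosed A) →
      (⋂ A ∈ S, A).Nonempty) ∧
    (∃ F : Ultrafilter ℕ+,
      (∀ A : Set ℕ+, A.Nonempty → upClosed A → A ∈ F)) ∧
    (∀ F : Ultrafilter ℕ+,
      (∀ A : Set ℕ+, A.Nonempty → upClosed A → A ∈ F) →
      ∀ G : Ultrafilter ℕ+, sdvd G F) := by
  have fip : ∀ S : Finset (Set ℕ+), (∀ A ∈ S, A.Nonempty ∧ upClosed A) →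
      (⋂ A ∈ S, A).Nonempty := by
    intro S hS
    classical
    set f : Set ℕ+ → ℕ+ := fun A => if h : A.Nonempty then h.choose else 1 with hf
    refine ⟨∏ A ∈ S, f A, ?_⟩
    simp only [Set.mem_iInter]
    intro A hA
    obtain ⟨hne, hup⟩ := hS A hA
    have hfA : f A ∈ A := by
      simp only [hf, dif_pos hne]; exact hne.choose_spec
    exact hup (f A) hfA _ (Finset.dvd_prod_of_mem f hA)
  refine ⟨fip, ?_, ?_⟩
  · set g : Set (Set ℕ+) := {A | A.Nonempty ∧ upClosed A} with hg
    have hne : (Filter.generate g).NeBot := by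
      rw [Filter.neBot_iff]
      intro hbot
      have : (∅ : Set ℕ+) ∈ Filter.generate g := by rw [hbot]; exact Filter.mem_bot
      rw [Filter.mem_generate_iff] at this
      obtain ⟨t, htg, htfin, hsub⟩ := this
      have : (⋂ A ∈ htfin.toFinset, A).Nonempty := by
        refine fip _ (fun A hA => htg ?_)
        simpa using hA
      obtain ⟨x, hx⟩ := this
      simp only [Set.mem_iInter] at hx
      exact hsub (fun A hA => hx A (by simpa using hA)) 
    refine ⟨Ultrafilter.of (Filter.generate g), fun A hA hup => ?_⟩
    exact (Ultrafilter.of_le (Filter.generate g)) (Filter.mem_generate_of_mem ⟨hA, hup⟩)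
  · intro F hF G A hAG hup
    exact hF A (G.nonempty_of_mem hAG) hup
end

section
/- For every ordinal δ of cardinality at most continuum, there exists a strictly increasing chain ⟨F_α : α < δ⟩ of ultrafilters on the positive natural numbers under the relation ∼∣ (strictly increasing meaning F_β ∼∣ F_α and F_α ̸∼∣ F_β for β < α). -/
/-!
Take divisibility-closed sets `Y i`, `i < δ`, that are independent: every finite combination
`Y j₁ ∩ … ∩ Y jₘ ∩ (Y k₁)ᶜ ∩ … ∩ (Y kₙ)ᶜ` meets the multiples of any point outside the `Y kₗ`.
A family of size `𝔠` is given by the multiples of the primes along the branches of the binary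
tree, each node being coded by its own prime. By transfinite recursion, `F α` is an ultrafilter
containing the divisibility-closed sets of every earlier `F β`, the sets `Y β` for `β < α` and
the sets `(Y γ)ᶜ` for `γ ≥ α`. These have the finite intersection property because the earlier
ultrafilters form a `∼∣`-chain that already contains every `(Y γ)ᶜ` with `γ ≥ α`, and
independence supplies the missing multiple. So `F β ∼∣ F α` for `β < α`, while the
divisibility-closed set `Y β` lies in `F α` but not in `F β`.
-/

open Filter Set

def upClosedPart (F : Ultrafilter ℕ+) : Filter ℕ+ where
  sets := {B | ∃ A ∈ F, upClosed A ∧ A ⊆ B}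
  univ_sets := ⟨univ, univ_mem, fun _ _ _ _ => trivial, subset_rfl⟩
  sets_of_superset := fun ⟨A, hA, hAup, hAB⟩ hBC => ⟨A, hA, hAup, hAB.trans hBC⟩
  inter_sets := fun ⟨A, hA, hAup, hAB⟩ ⟨A', hA', hA'up, hA'B⟩ =>
    ⟨A ∩ A', inter_mem hA hA', fun a ha n hn => ⟨hAup a ha.1 n hn, hA'up a ha.2 n hn⟩,
      inter_subset_inter hAB hA'B⟩

theorem sdvd_iff_le_upClosedPart {F G : Ultrafilter ℕ+} : sdvd F G ↔ ↑G ≤ upClosedPart F :=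
  ⟨fun h _ ⟨A, hA, hAup, hAB⟩ => mem_of_superset (h A hA hAup) hAB,
    fun h A hA hAup => h ⟨A, hA, hAup, subset_rfl⟩⟩

theorem sdvd_refl (F : Ultrafilter ℕ+) : sdvd F F := fun _ hA _ => hA

theorem upClosedPart_le_upClosedPart {F G : Ultrafilter ℕ+} (h : sdvd F G) :
    upClosedPart G ≤ upClosedPart F :=
  fun _ ⟨A, hA, hAup, hAB⟩ => ⟨A, h A hA hAup, hAup, hAB⟩

structure IsDvdIndependent {ι : Type*} (Y : ι → Set ℕ+) : Prop where
  upClosed_apply : ∀ i, upClosed (Y i)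
  one_notMem : ∀ i, 1 ∉ Y i
  exists_multiple : ∀ (a : ℕ+) (S T : Finset ι), Disjoint S T → (∀ k ∈ T, a ∉ Y k) →
    ∃ m, a ∣ m ∧ (∀ j ∈ S, m ∈ Y j) ∧ ∀ k ∈ T, m ∉ Y k

section Chain

variable {ι : Type*} [LinearOrder ι] (Y : ι → Set ℕ+)

def stageFilter (i : ι) (F : ∀ j, j < i → Ultrafilter ℕ+) : Filter ℕ+ :=
  (⨅ j : Iio i, upClosedPart (F j j.2)) ⊓ (⨅ (j) (_ : j < i), 𝓟 (Y j)) ⊓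
    ⨅ (k) (_ : i ≤ k), 𝓟 (Y k)ᶜ

/-- `Classical.epsilon` picks an arbitrary ultrafilter when the stage filter is trivial;
`dvdChain_le_stageFilter` shows that this never happens for independent families. -/
noncomputable def dvdChain [WellFoundedLT ι] : ι → Ultrafilter ℕ+ :=
  WellFoundedLT.fix fun i F =>
    Classical.epsilon fun U : Ultrafilter ℕ+ => ↑U ≤ stageFilter Y i F

variable {Y}

theorem stageFilter_le_upClosedPart {i j : ι} (F : ∀ j, j < i → Ultrafilter ℕ+) (h : j < i) :
    stageFilter Y i F ≤ upClosedPart (F j h) :=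
  inf_le_left.trans <| inf_le_left.trans <|
    iInf_le (fun j : Iio i => upClosedPart (F j j.2)) ⟨j, h⟩

theorem mem_stageFilter {i j : ι} (F : ∀ j, j < i → Ultrafilter ℕ+) (h : j < i) :
    Y j ∈ stageFilter Y i F :=
  mem_inf_of_left <| mem_inf_of_right <| mem_iInf_of_mem j <| mem_iInf_of_mem h <|
    mem_principal_self _

theorem compl_mem_stageFilter {i k : ι} (F : ∀ j, j < i → Ultrafilter ℕ+) (h : i ≤ k) :
    (Y k)ᶜ ∈ stageFilter Y i F :=
  mem_inf_of_right <| mem_iInf_of_mem k <| mem_iInf_of_mem h <| mem_principal_self _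

theorem dvdChain_le_of_neBot [WellFoundedLT ι] {i : ι}
    (h : (stageFilter Y i fun j _ => dvdChain Y j).NeBot) :
    ↑(dvdChain Y i) ≤ stageFilter Y i fun j _ => dvdChain Y j := by
  rw [dvdChain, WellFoundedLT.fix_eq]
  exact Classical.epsilon_spec (@Ultrafilter.exists_le _ _ h)

theorem exists_forall_dvd_mem_and_notMem {i : ι} {G : ι → Ultrafilter ℕ+}
    (hmono : ∀ j j', j ≤ j' → j' < i → sdvd (G j) (G j'))
    (hcompl : ∀ j < i, ∀ k, i ≤ k → (Y k)ᶜ ∈ G j) (hone : ∀ k, 1 ∉ Y k)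
    {A : Set ℕ+} (hA : A ∈ ⨅ j : Iio i, upClosedPart (G j))
    (T : Finset ι) (hT : ∀ k ∈ T, i ≤ k) :
    ∃ a, (∀ m, a ∣ m → m ∈ A) ∧ ∀ k ∈ T, a ∉ Y k := by
  rcases isEmpty_or_nonempty (Iio i) with hi | hi
  · rw [iInf_of_empty, mem_top] at hA
    exact ⟨1, fun m _ => hA ▸ mem_univ m, fun k _ => hone k⟩
  have hdir : Directed (· ≥ ·) fun j : Iio i => upClosedPart (G j) := fun j j' =>
    ⟨max j j', upClosedPart_le_upClosedPart (hmono _ _ le_sup_left (max_lt j.2 j'.2)),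
      upClosedPart_le_upClosedPart (hmono _ _ le_sup_right (max_lt j.2 j'.2))⟩
  obtain ⟨⟨j, hj⟩, A', hA', hA'up, hA'A⟩ := (mem_iInf_of_directed hdir A).1 hA
  have hmem : A' ∩ ⋂ k ∈ T, (Y k)ᶜ ∈ G j :=
    inter_mem hA' ((biInter_finset_mem T).2 fun k hk => hcompl j hj k (hT k hk))
  obtain ⟨a, haA', haT⟩ := Ultrafilter.nonempty_of_mem hmem
  exact ⟨a, fun m ham => hA'A (hA'up a haA' m ham), fun k hk => mem_iInter₂.1 haT k hk⟩

theorem stageFilter_neBot (hY : IsDvdIndependent Y) {i : ι} {G : ι → Ultrafilter ℕ+}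
    (hmono : ∀ j j', j ≤ j' → j' < i → sdvd (G j) (G j'))
    (hcompl : ∀ j < i, ∀ k, i ≤ k → (Y k)ᶜ ∈ G j) :
    (stageFilter Y i fun j _ => G j).NeBot := by
  refine forall_mem_nonempty_iff_neBot.1 fun C hC => ?_
  obtain ⟨C₁₂, hC₁₂, C₃, hC₃, rfl⟩ := mem_inf_iff.1 hC
  obtain ⟨C₁, hC₁, C₂, hC₂, rfl⟩ := mem_inf_iff.1 hC₁₂
  obtain ⟨S, hSfin, hSlt, hSC₂⟩ := mem_biInf_principal.1 hC₂
  obtain ⟨T, hTfin, hTge, hTC₃⟩ := mem_biInf_principal.1 hC₃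
  obtain ⟨a, haC₁, haT⟩ := exists_forall_dvd_mem_and_notMem hmono hcompl hY.one_notMem hC₁
    hTfin.toFinset fun k hk => hTge k (hTfin.mem_toFinset.1 hk)
  have hST : Disjoint hSfin.toFinset hTfin.toFinset := Finset.disjoint_left.2 fun k hkS hkT =>
    (hSlt k (hSfin.mem_toFinset.1 hkS)).not_ge (hTge k (hTfin.mem_toFinset.1 hkT))
  obtain ⟨m, ham, hmS, hmT⟩ := hY.exists_multiple a _ _ hST haT
  refine ⟨m, ⟨haC₁ m ham, hSC₂ ?_⟩, hTC₃ ?_⟩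
  · exact mem_iInter₂.2 fun j hj => hmS j (hSfin.mem_toFinset.2 hj)
  · exact mem_iInter₂.2 fun k hk => hmT k (hTfin.mem_toFinset.2 hk)

variable [WellFoundedLT ι]

theorem dvdChain_le_stageFilter (hY : IsDvdIndependent Y) (i : ι) :
    ↑(dvdChain Y i) ≤ stageFilter Y i fun j _ => dvdChain Y j := by
  induction i using WellFoundedLT.induction with
  | ind i ih =>
  refine dvdChain_le_of_neBot (stageFilter_neBot hY ?_ ?_)
  · intro j j' hjj' hj'
    rcases hjj'.eq_or_lt with rfl | hjj'
    · exact sdvd_refl _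
    · exact sdvd_iff_le_upClosedPart.2 <|
        (ih j' hj').trans (stageFilter_le_upClosedPart _ hjj')
  · exact fun j hj k hik => ih j hj (compl_mem_stageFilter _ (hj.le.trans hik))

theorem sdvd_dvdChain (hY : IsDvdIndependent Y) {j i : ι} (h : j < i) :
    sdvd (dvdChain Y j) (dvdChain Y i) :=
  sdvd_iff_le_upClosedPart.2 <| (dvdChain_le_stageFilter hY i).trans
    (stageFilter_le_upClosedPart _ h)

theorem not_sdvd_dvdChain (hY : IsDvdIndependent Y) {j i : ι} (h : j < i) :
    ¬ sdvd (dvdChain Y i) (dvdChain Y j) := fun hij =>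
  Ultrafilter.compl_notMem_iff.2
    (hij _ (dvdChain_le_stageFilter hY i (mem_stageFilter _ h)) (hY.upClosed_apply j))
    (dvdChain_le_stageFilter hY j (compl_mem_stageFilter _ le_rfl))

end Chain

def primeMultiples (P : Set ℕ+) : Set ℕ+ := {k | ∃ p ∈ P, p ∣ k}

theorem isDvdIndependent_primeMultiples {ι : Type*} {P : ι → Set ℕ+}
    (hprime : ∀ i, ∀ p ∈ P i, (p : ℕ).Prime)
    (hsep : ∀ i (T : Finset ι), i ∉ T → ∃ p ∈ P i, ∀ k ∈ T, p ∉ P k) :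
    IsDvdIndependent fun i => primeMultiples (P i) where
  upClosed_apply _ _ := fun ⟨p, hp, hpa⟩ _ han => ⟨p, hp, hpa.trans han⟩
  one_notMem i := fun ⟨p, hp, hp1⟩ =>
    Nat.not_prime_one (by simpa [(PNat.dvd_one_iff p).1 hp1] using hprime i p hp)
  exists_multiple a S T hST haT := by
    choose! p hpP hpT using fun j (hj : j ∈ S) => hsep j T (Finset.disjoint_left.1 hST hj)
    refine ⟨a * ∏ j ∈ S, p j, dvd_mul_right _ _,
      fun j hj => ⟨p j, hpP j hj, dvd_mul_of_dvd_right (Finset.dvd_prod_of_mem _ hj) _⟩, ?_⟩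
    rintro k hk ⟨q, hqP, hqm⟩
    have hq := hprime k q hqP
    rw [PNat.dvd_iff, PNat.mul_coe] at hqm
    push_cast at hqm
    rcases hq.prime.dvd_or_dvd hqm with hqa | hqp
    · exact haT k hk ⟨q, hqP, PNat.dvd_iff.2 hqa⟩
    · obtain ⟨j, hj, hqj⟩ := (Prime.dvd_finsetProd_iff hq.prime _).1 hqp
      have hqj : q = p j :=
        PNat.coe_injective <| (Nat.prime_dvd_prime_iff_eq hq (hprime j _ (hpP j hj))).1 hqj
      exact hpT j hj k hk (hqj ▸ hqP)

noncomputable def primeCode (l : List Bool) : ℕ+ :=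
  ⟨Nat.nth Nat.Prime (Encodable.encode l), (Nat.prime_nth_prime _).pos⟩

theorem primeCode_injective : Function.Injective primeCode := fun _ _ h =>
  Encodable.encode_injective <|
    Nat.nth_injective Nat.infinite_setOfPred_prime (congrArg PNat.val h)

def branchPrimes (x : ℕ → Bool) : Set ℕ+ := range fun n => primeCode ((List.range n).map x)

theorem exists_mem_branchPrimes_forall_notMem {x : ℕ → Bool} {T : Finset (ℕ → Bool)}
    (hx : x ∉ T) :
    ∃ p ∈ branchPrimes x, ∀ y ∈ T, p ∉ branchPrimes y := by
  have hdiff : ∀ y ∈ T, ∃ i, x i ≠ y i := fun y hy =>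
    Function.ne_iff.1 (ne_of_mem_of_not_mem hy hx).symm
  choose! i hi using hdiff
  refine ⟨_, mem_range_self (T.sup i + 1), fun y hy ⟨m, hm⟩ => hi y hy ?_⟩
  have hprefix := primeCode_injective hm
  obtain rfl : m = T.sup i + 1 := by simpa using congrArg List.length hprefix
  exact (List.map_inj_left.1 hprefix (i y)
    (List.mem_range.2 (Nat.lt_succ_of_le (Finset.le_sup hy)))).symm

theorem isDvdIndependent_branchPrimes {ι : Type*} (e : ι ↪ (ℕ → Bool)) :
    IsDvdIndependent fun i => primeMultiples (branchPrimes (e i)) := by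
  refine isDvdIndependent_primeMultiples (fun i p ⟨n, hn⟩ => hn ▸ Nat.prime_nth_prime _)
    fun i T hi => ?_
  obtain ⟨p, hp, hpT⟩ := exists_mem_branchPrimes_forall_notMem (T := T.map e)
    ((Finset.mem_map' e).not.2 hi)
  exact ⟨p, hp, fun k hk => hpT (e k) (Finset.mem_map_of_mem e hk)⟩

/-- for every ordinal δ of cardinality ≤ 𝔠 there is a strictly
∼∣-increasing chain of ultrafilters of length δ. -/
theorem exists_long_chain (δ : Ordinal) (hδ : δ.card ≤ Cardinal.continuum) :
    ∃ F : {α : Ordinal // α < δ} → Ultrafilter ℕ+,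
      ∀ a b : {α : Ordinal // α < δ}, a.1 < b.1 →
        sdvd (F a) (F b) ∧ ¬ sdvd (F b) (F a) := by
  obtain ⟨e⟩ : Nonempty ({α : Ordinal // α < δ} ↪ (ℕ → Bool)) := by
    rw [← Cardinal.lift_mk_le',
      show Cardinal.mk {α // α < δ} = _ from Cardinal.mk_Iio_ordinal δ]
    simpa [Cardinal.lift_lift] using Cardinal.lift_le.2 hδ
  have hY := isDvdIndependent_branchPrimes e
  exact ⟨dvdChain _, fun a b h => ⟨sdvd_dvdChain hY h, not_sdvd_dvdChain hY h⟩⟩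
end

section
/- Every ultrafilter F on the positive natural numbers with F ≠ the principal ultrafilter at 1 either has an immediate ∼∣-predecessor, or is (up to =∼-equivalence) the least upper bound of a ∼∣-chain of ultrafilters none of which is =∼-equivalent to F. -/
/-- F =∼ G. -/
def eqsim (F G : Ultrafilter ℕ+) : Prop := sdvd F G ∧ sdvd G F

/-- The trace of an ultrafilter on the upward closed sets. -/
def trU (F : Ultrafilter ℕ+) : Set (Set ℕ+) := {A | A ∈ F ∧ upClosed A}

lemma sdvd_iff {F G : Ultrafilter ℕ+} : sdvd F G ↔ trU F ⊆ trU G := by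
  constructor
  · intro h A hA
    exact ⟨h A hA.1 hA.2, hA.2⟩
  · intro h A hA hup
    exact (h ⟨hA, hup⟩).1

lemma mem_trU_pure_one {A : Set ℕ+} (hA : A ∈ trU (pure 1)) : A = Set.univ := by
  apply Set.eq_univ_of_forall
  intro n
  exact hA.2 1 hA.1 n (one_dvd n)

lemma univ_mem_trU (F : Ultrafilter ℕ+) : Set.univ ∈ trU F :=
  ⟨Filter.univ_mem, fun _ _ n _ => Set.mem_univ n⟩

lemma mem_uf_bind {α β : Type} (f : Ultrafilter α) (m : α → Ultrafilter β) (s : Set β) :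
    s ∈ f.bind m ↔ {a | s ∈ m a} ∈ f := Iff.rfl

/-- A chain of traces of ultrafilters is realized (its union is a trace). -/
lemma realize_chain (C : Set (Set (Set ℕ+))) (hne : C.Nonempty)
    (hchain : IsChain (· ⊆ ·) C)
    (hC : ∀ P ∈ C, ∃ G : Ultrafilter ℕ+, trU G = P) :
    ∃ G : Ultrafilter ℕ+, trU G = ⋃₀ C := by
  haveI : Nonempty ↥C := hne.to_subtype
  obtain ⟨g, hg⟩ : ∃ g : ↥C → Ultrafilter ℕ+, ∀ P : ↥C, trU (g P) = (P : Set (Set ℕ+)) := by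
    choose g hg using hC
    exact ⟨fun P => g P.1 P.2, fun P => hg P.1 P.2⟩
  set T : ↥C → Set ↥C := fun P => {P' | (P : Set (Set ℕ+)) ⊆ (P' : Set (Set ℕ+))} with hT
  have hTne : ∀ P, (T P).Nonempty := fun P => ⟨P, fun _ h => h⟩
  set f : Filter ↥C := ⨅ P, Filter.principal (T P) with hf
  have hdir : Directed (· ≥ ·) (fun P => Filter.principal (T P)) := by
    intro P1 P2
    rcases hchain.total P1.2 P2.2 with h | h
    · exact ⟨P2, Filter.principal_mono.2 (fun P' hP' => h.trans hP'),
        Filter.principal_mono.2 (fun P' hP' => hP')⟩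
    · exact ⟨P1, Filter.principal_mono.2 (fun P' hP' => hP'),
        Filter.principal_mono.2 (fun P' hP' => h.trans hP')⟩
  haveI : f.NeBot := by
    refine Filter.iInf_neBot_of_directed' hdir ?_
    intro P
    exact Filter.principal_neBot_iff.2 (hTne P)
  set D : Ultrafilter ↥C := Ultrafilter.of f with hD
  have hTD : ∀ P, T P ∈ D := by
    intro P
    exact (Ultrafilter.of_le f) (Filter.mem_iInf_of_mem P (Filter.mem_principal_self _))
  refine ⟨D.bind g, ?_⟩
  ext A
  constructor
  · rintro ⟨hAG, hup⟩
    have : {P : ↥C | A ∈ g P} ∈ D := (mem_uf_bind D g A).1 hAG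
    obtain ⟨P, hP⟩ := Ultrafilter.nonempty_of_mem this
    refine ⟨(P : Set (Set ℕ+)), P.2, ?_⟩
    rw [← hg P]
    exact ⟨hP, hup⟩
  · rintro ⟨P0, hP0C, hAP0⟩
    have hup : upClosed A := by
      have e : trU (g ⟨P0, hP0C⟩) = P0 := hg ⟨P0, hP0C⟩
      have := hAP0; rw [← e] at this; exact this.2
    refine ⟨?_, hup⟩
    rw [mem_uf_bind]
    refine Filter.mem_of_superset (hTD ⟨P0, hP0C⟩) ?_
    intro P hP
    have : A ∈ trU (g P) := by rw [hg P]; exact hP hAP0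
    exact this.1

/-- every F ≠ 1 has an immediate predecessor or is the least
upper bound of a chain of ultrafilters none of which is =∼-equivalent to F. -/
theorem predecessor_or_limit (F : Ultrafilter ℕ+) (hF : F ≠ pure 1) :
    (∃ G : Ultrafilter ℕ+, sdvd G F ∧ ¬ eqsim G F ∧
      ∀ H : Ultrafilter ℕ+, sdvd G H → sdvd H F → (eqsim G H ∨ eqsim H F)) ∨
    (∃ (I : Type) (C : I → Ultrafilter ℕ+),
      (∀ i j : I, sdvd (C i) (C j) ∨ sdvd (C j) (C i)) ∧
      (∀ i : I, ¬ eqsim (C i) F) ∧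
      (∀ i : I, sdvd (C i) F) ∧
      (∀ H : Ultrafilter ℕ+, (∀ i : I, sdvd (C i) H) → sdvd F H)) := by
  by_cases h0 : trU F = trU (pure 1)
  · -- F has only trivial upward closed sets: F is the sup of the empty chain
    right
    refine ⟨PEmpty, fun i => i.elim, fun i => i.elim, fun i => i.elim, fun i => i.elim, ?_⟩
    intro H _ A hA hup
    have : A ∈ trU (pure 1) := h0 ▸ (⟨hA, hup⟩ : A ∈ trU F)
    rw [mem_trU_pure_one this]
    exact Filter.univ_mem
  · -- main case
    set S' : Set (Set (Set ℕ+)) :=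
      {P | (∃ G : Ultrafilter ℕ+, trU G = P) ∧ P ⊆ trU F ∧ P ≠ trU F} with hS'
    have hone : trU (pure 1) ∈ S' := by
      refine ⟨⟨pure 1, rfl⟩, ?_, fun h => h0 h.symm⟩
      intro A hA
      rw [mem_trU_pure_one hA]
      exact univ_mem_trU F
    -- Zorn: a maximal chain in S'
    obtain ⟨C, hxC, hCmax⟩ := zorn_subset_nonempty
      {c : Set (Set (Set ℕ+)) | c ⊆ S' ∧ IsChain (· ⊆ ·) c}
      (by
        intro cc hccsub hccchain hccne
        refine ⟨⋃₀ cc, ⟨?_, ?_⟩, fun s hs => Set.subset_sUnion_of_mem hs⟩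
        · rintro P ⟨c, hc, hPc⟩
          exact (hccsub hc).1 hPc
        · rintro a ⟨c1, hc1, hac1⟩ b ⟨c2, hc2, hbc2⟩ hab
          rcases hccchain.total hc1 hc2 with h | h
          · exact (hccsub hc2).2 (h hac1) hbc2 hab
          · exact (hccsub hc1).2 hac1 (h hbc2) hab)
      {trU (pure 1)} ⟨Set.singleton_subset_iff.2 hone, Set.Subsingleton.isChain (Set.subsingleton_singleton)⟩
    have hCsub : C ⊆ S' := hCmax.1.1
    have hCchain : IsChain (· ⊆ ·) C := hCmax.1.2
    have hCne : C.Nonempty := ⟨trU (pure 1), hxC rfl⟩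
    set Q : Set (Set ℕ+) := ⋃₀ C with hQ
    have hQsub : Q ⊆ trU F := by
      rintro A ⟨P, hPC, hAP⟩
      exact (hCsub hPC).2.1 hAP
    by_cases hQF : Q = trU F
    · -- F is the lub of the chain C
      right
      obtain ⟨g, hg⟩ : ∃ g : ↥C → Ultrafilter ℕ+, ∀ P : ↥C, trU (g P) = (P : Set (Set ℕ+)) := by
        have := fun (P : ↥C) => (hCsub P.2).1
        choose g hg using this
        exact ⟨g, hg⟩
      refine ⟨↥C, g, ?_, ?_, ?_, ?_⟩
      · intro i j
        rcases hCchain.total i.2 j.2 with h | h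
        · left; rw [sdvd_iff, hg i, hg j]; exact h
        · right; rw [sdvd_iff, hg j, hg i]; exact h
      · intro i hi
        have h1 : trU (g i) ⊆ trU F := sdvd_iff.1 hi.1
        have h2 : trU F ⊆ trU (g i) := sdvd_iff.1 hi.2
        exact (hCsub i.2).2.2 (by rw [← hg i]; exact le_antisymm h1 h2)
      · intro i
        rw [sdvd_iff, hg i]
        exact (hCsub i.2).2.1
      · intro H hH A hA hup
        have : A ∈ Q := by rw [hQF]; exact ⟨hA, hup⟩
        obtain ⟨P, hPC, hAP⟩ := this
        have : A ∈ trU (g ⟨P, hPC⟩) := by rw [hg ⟨P, hPC⟩]; exact hAP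
        exact hH ⟨P, hPC⟩ A this.1 this.2
    · -- Q realizes an immediate predecessor
      left
      obtain ⟨G, hG⟩ := realize_chain C hCne hCchain (fun P hP => (hCsub hP).1)
      rw [← hQ] at hG
      refine ⟨G, ?_, ?_, ?_⟩
      · rw [sdvd_iff, hG]; exact hQsub
      · rintro ⟨_, hFG⟩
        exact hQF (le_antisymm hQsub (by rw [← hG]; exact sdvd_iff.1 hFG))
      · intro H hGH hHF
        by_cases hHFeq : trU H = trU F
        · right
          exact ⟨hHF, by rw [sdvd_iff, hHFeq]⟩
        · left
          refine ⟨hGH, ?_⟩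
          rw [sdvd_iff] at hGH ⊢
          rw [hG] at hGH
          rw [hG]
          -- trU H ∈ S', and C ∪ {trU H} is a chain extending C, so trU H ∈ C
          have hHS' : trU H ∈ S' := ⟨⟨H, rfl⟩, sdvd_iff.1 hHF, hHFeq⟩
          have hext : insert (trU H) C ∈
              {c : Set (Set (Set ℕ+)) | c ⊆ S' ∧ IsChain (· ⊆ ·) c} := by
            constructor
            · rintro P (rfl | hP)
              · exact hHS'
              · exact hCsub hP
            · have hbelow : ∀ P ∈ C, P ⊆ trU H := by
                intro P hP
                exact (Set.subset_sUnion_of_mem hP).trans hGH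
              rintro a (rfl | ha) b (rfl | hb) hab
              · exact absurd rfl hab
              · right; exact hbelow b hb
              · left; exact hbelow a ha
              · exact hCchain ha hb hab
          have : insert (trU H) C = C :=
            le_antisymm (hCmax.2 hext (Set.subset_insert _ _)) (Set.subset_insert _ _)
          have hHC : trU H ∈ C := this ▸ Set.mem_insert _ _
          exact Set.subset_sUnion_of_mem hHC
end

section
/- Let F, G be ultrafilters on the positive natural numbers, B ⊆ P a set of primes, and A = B↑ the upward closure of B under divisibility. If A ∈ D(F·G), then A ∈ D(F) or A ∈ D(G). -/
theorem upClosed_setOf_exists_dvd (B : Set ℕ+) : upClosed {n : ℕ+ | ∃ b ∈ B, b ∣ n} :=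
  fun _ ⟨b, hb, hba⟩ _ han => ⟨b, hb, hba.trans han⟩

theorem mem_DF_iff_of_upClosed {A : Set ℕ+} (hA : upClosed A) (F : Ultrafilter ℕ+) :
    A ∈ DF F ↔ A ∈ F := by
  suffices {n : ℕ+ | ∀ m : ℕ+, n * m ∈ A} = A by rw [DF, Set.mem_ofPred, this]
  ext n
  exact ⟨fun hn => by simpa using hn 1, fun hn m => hA n hn _ (dvd_mul_right n m)⟩

theorem mul_mem_setOf_exists_dvd_iff {B : Set ℕ+} (hB : ∀ p ∈ B, (p : ℕ).Prime) (m n : ℕ+) :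
    m * n ∈ {k : ℕ+ | ∃ b ∈ B, b ∣ k} ↔
      m ∈ {k : ℕ+ | ∃ b ∈ B, b ∣ k} ∨ n ∈ {k : ℕ+ | ∃ b ∈ B, b ∣ k} := by
  simp only [Set.mem_ofPred, PNat.dvd_iff, PNat.mul_coe]
  constructor
  · rintro ⟨b, hb, hbmn⟩
    exact ((hB b hb).dvd_mul.mp hbmn).imp (⟨b, hb, ·⟩) (⟨b, hb, ·⟩)
  · rintro (⟨b, hb, hbm⟩ | ⟨b, hb, hbn⟩)
    · exact ⟨b, hb, hbm.mul_right _⟩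
    · exact ⟨b, hb, hbn.mul_left _⟩

theorem mem_mulUF_iff_of_mul_mem_iff {A : Set ℕ+} (hA : ∀ m n : ℕ+, m * n ∈ A ↔ m ∈ A ∨ n ∈ A)
    (F G : Ultrafilter ℕ+) : A ∈ mulUF F G ↔ A ∈ F ∨ A ∈ G := by
  have fibre (n : ℕ+) : {m : ℕ+ | m * n ∈ A} = A ∪ {_m | n ∈ A} := Set.ext fun m => hA m n
  have good_fibres : {n : ℕ+ | {m : ℕ+ | m * n ∈ A} ∈ G} = A ∪ {_n | A ∈ G} := by
    ext n
    by_cases hn : n ∈ A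
    · simp only [Set.mem_ofPred, Set.mem_union, fibre, hn, Set.ofPred_true, Set.union_univ,
        true_or, iff_true]
      exact Filter.univ_mem
    · simp [fibre, hn]
  change {n : ℕ+ | {m : ℕ+ | m * n ∈ A} ∈ G} ∈ F ↔ _
  rw [good_fibres, Ultrafilter.union_mem_iff]
  exact or_congr_right Filter.eventually_const

/-- for B ⊆ P and A = B↑, A ∈ D(F·G) implies A ∈ D(F) or A ∈ D(G). -/
theorem DF_mul_primes (F G : Ultrafilter ℕ+) (B : Set ℕ+)
    (hB : ∀ p ∈ B, (p : ℕ).Prime)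
    (A : Set ℕ+) (hA : A = {n : ℕ+ | ∃ b ∈ B, b ∣ n})
    (h : A ∈ DF (mulUF F G)) : A ∈ DF F ∨ A ∈ DF G := by
  have hup : upClosed A := hA ▸ upClosed_setOf_exists_dvd B
  have hprime : ∀ m n : ℕ+, m * n ∈ A ↔ m ∈ A ∨ n ∈ A := hA ▸ mul_mem_setOf_exists_dvd_iff hB
  simp only [mem_DF_iff_of_upClosed hup] at h ⊢
  exact (mem_mulUF_iff_of_mul_mem_iff hprime F G).mp h
end
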